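/- In a 2-nilpotent group Γ of odd order with m the exponent of [Γ,Γ] and Abelian operation x + y := xy[x,y]^{(m-1)/2}, the inverse of x with respect to + equals x⁻¹, and x − y + z = x·y⁻¹·z·[x,y⁻¹]^{(m-1)/2}·[xy⁻¹,z]^{(m-1)/2} for all x,y,z ∈ Γ. -/

import Mathlib

/-- The commutator `[x,y] = x⁻¹y⁻¹xy` (the paper's convention). -/
def brkt {Γ : Type*} [Group Γ] (x y : Γ) : Γ := x⁻¹ * y⁻¹ * x * y

open scoped commutatorElement in
lemma brkt_mem_commutator {Γ : Type*} [Group Γ] (x y : Γ) :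
    brkt x y ∈ commutator Γ := by
  have : brkt x y = ⁅x⁻¹, y⁻¹⁆ := by
    simp [brkt, commutatorElement_def]
  rw [this, commutator_def]
  exact Subgroup.commutator_mem_commutator (Subgroup.mem_top _) (Subgroup.mem_top _)

/-- In a 2-nilpotent group `Γ` of odd order, with `m` the exponent of the commutator
subgroup and the Baer operation `x + y := x·y·[x,y]^((m-1)/2)`: the `+`-inverse of `x`
is `x⁻¹`, and `x − y + z = x·y⁻¹·z·[x,y⁻¹]^((m-1)/2)·[xy⁻¹,z]^((m-1)/2)`. -/
theorem baer_inverse_and_maltsev_formula {Γ : Type*} [Group Γ] [Fintype Γ]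
    (hnil : commutator Γ ≤ Subgroup.center Γ)
    (hodd : Odd (Fintype.card Γ))
    (m : ℕ) (hm : m = Monoid.exponent ↥(commutator Γ))
    (add : Γ → Γ → Γ)
    (hadd : ∀ x y, add x y = x * y * (brkt x y) ^ ((m - 1) / 2)) :
    (∀ x : Γ, add x x⁻¹ = 1 ∧ add x⁻¹ x = 1) ∧
    (∀ x y z : Γ, add (add x y⁻¹) z
        = x * y⁻¹ * z * (brkt x y⁻¹) ^ ((m - 1) / 2)
            * (brkt (x * y⁻¹) z) ^ ((m - 1) / 2)) := by
  have hcent : ∀ x y : Γ, ∀ n : ℕ, (brkt x y) ^ n ∈ Subgroup.center Γ := fun x y n =>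
    pow_mem (hnil (brkt_mem_commutator x y)) n
  constructor
  · intro x
    have h1 : brkt x x⁻¹ = 1 := by simp [brkt]
    have h2 : brkt x⁻¹ x = 1 := by simp [brkt]
    constructor
    · rw [hadd, h1]; simp
    · rw [hadd, h2]; simp
  · intro x y z
    set k := (m - 1) / 2
    set c := (brkt x y⁻¹) ^ k with hc
    have hcc : c ∈ Subgroup.center Γ := hcent x y⁻¹ k
    have haxy : add x y⁻¹ = x * y⁻¹ * c := hadd x y⁻¹
    have hb : brkt (add x y⁻¹) z = brkt (x * y⁻¹) z := by
      rw [haxy, brkt, brkt]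
      have hz : c * z = z * c := (Subgroup.mem_center_iff.mp hcc z).symm
      have hz' : c⁻¹ * z⁻¹ = z⁻¹ * c⁻¹ := by
        have := (Subgroup.mem_center_iff.mp (inv_mem hcc) z⁻¹)
        exact this.symm
      rw [mul_inv_rev]
      calc c⁻¹ * (x * y⁻¹)⁻¹ * z⁻¹ * (x * y⁻¹ * c) * z
          = (x * y⁻¹)⁻¹ * (c⁻¹ * z⁻¹) * (x * y⁻¹ * c) * z := by
              rw [← Subgroup.mem_center_iff.mp (inv_mem hcc) (x * y⁻¹)⁻¹]; group
        _ = (x * y⁻¹)⁻¹ * (z⁻¹ * c⁻¹) * (x * y⁻¹ * c) * z := by rw [hz']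
        _ = (x * y⁻¹)⁻¹ * z⁻¹ * (c⁻¹ * (x * y⁻¹)) * c * z := by group
        _ = (x * y⁻¹)⁻¹ * z⁻¹ * ((x * y⁻¹) * c⁻¹) * c * z := by
              rw [← Subgroup.mem_center_iff.mp (inv_mem hcc) (x * y⁻¹)]
        _ = (x * y⁻¹)⁻¹ * z⁻¹ * (x * y⁻¹) * z := by group
    rw [hadd, hb, haxy]
    have hz : c * z = z * c := (Subgroup.mem_center_iff.mp hcc z).symm
    calc x * y⁻¹ * c * z * brkt (x * y⁻¹) z ^ k
        = x * y⁻¹ * (c * z) * brkt (x * y⁻¹) z ^ k := by group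
      _ = x * y⁻¹ * (z * c) * brkt (x * y⁻¹) z ^ k := by rw [hz]
      _ = x * y⁻¹ * z * c * brkt (x * y⁻¹) z ^ k := by group
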